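/- For X = (1,0): E_X(1,0) = ½, E_X(0,1) = ¾, and E_X(1,1) = E_X(1,−1) = 1/√5. In particular, since 1/√5 < ½ < ¾, the relative energy E_X attains at y = X neither its global minimum nor its global maximum over the indicatrix {y : y₁⁴+3y₁²y₂²+y₂⁴ = 1}. -/
import Mathlib


noncomputable def E (X₁ X₂ y₁ y₂ : ℝ) : ℝ :=
  ((2*X₁^2 + 3*X₂^2)*y₁^6 + (9*X₁^2 + 6*X₂^2)*y₁^4*y₂^2 + 10*X₁*X₂*y₁^3*y₂^3
    + (6*X₁^2 + 9*X₂^2)*y₁^2*y₂^4 + (3*X₁^2 + 2*X₂^2)*y₂^6)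
  / (4 * (y₁^4 + 3*y₁^2*y₂^2 + y₂^4) ^ ((3:ℝ)/2))

lemma sqrt5_pos : (0:ℝ) < Real.sqrt 5 := Real.sqrt_pos.mpr (by norm_num)

lemma sqrt5_sq : Real.sqrt 5 ^ 2 = 5 := Real.sq_sqrt (by norm_num)

lemma rpow5 : (5:ℝ) ^ ((3:ℝ)/2) = 5 * Real.sqrt 5 := by
  rw [show (3:ℝ)/2 = 1 + 1/2 by norm_num, Real.rpow_add (by norm_num), Real.rpow_one,
    ← Real.sqrt_eq_rpow]

lemma E10 : E 1 0 1 0 = 1/2 := by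
  simp [E, Real.one_rpow]; norm_num

lemma E01 : E 1 0 0 1 = 3/4 := by
  simp [E, Real.one_rpow]

lemma E11 : E 1 0 1 1 = 1 / Real.sqrt 5 := by
  have h := sqrt5_pos
  have h2 := sqrt5_sq
  simp only [E]
  norm_num [rpow5]
  field_simp
  nlinarith [h2]

lemma E1m1 : E 1 0 1 (-1) = 1 / Real.sqrt 5 := by
  have h := sqrt5_pos
  have h2 := sqrt5_sq
  simp only [E]
  norm_num [rpow5]
  field_simp
  nlinarith [h2]

lemma lt_half : 1 / Real.sqrt 5 < 1/2 := by
  have h : (2:ℝ) < Real.sqrt 5 := by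
    nlinarith [sqrt5_sq, sqrt5_pos]
  rw [div_lt_div_iff₀ sqrt5_pos (by norm_num)]
  linarith

lemma Ett : E 1 0 ((5:ℝ) ^ (-(1:ℝ)/4)) ((5:ℝ) ^ (-(1:ℝ)/4)) = 1 / Real.sqrt 5 := by
  set t : ℝ := (5:ℝ) ^ (-(1:ℝ)/4) with ht
  have h5 : (0:ℝ) ≤ 5 := by norm_num
  have ht4 : t ^ 4 = 1/5 := by
    rw [ht, ← Real.rpow_natCast ((5:ℝ) ^ (-(1:ℝ)/4)) 4, ← Real.rpow_mul h5]
    norm_num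
  have ht6 : t ^ 6 = 1 / (5 * Real.sqrt 5) := by
    rw [ht, ← Real.rpow_natCast ((5:ℝ) ^ (-(1:ℝ)/4)) 6, ← Real.rpow_mul h5]
    rw [show (-(1:ℝ)/4 * (6:ℕ)) = -(3/2) by push_cast; norm_num, Real.rpow_neg h5, rpow5, one_div]
  have ht42 : t ^ 4 * t ^ 2 = 1 / (5 * Real.sqrt 5) := by
    rw [← ht6]; ring
  have ht24 : t ^ 2 * t ^ 4 = 1 / (5 * Real.sqrt 5) := by
    rw [← ht6]; ring
  have hb : t^4 + 3*t^2*t^2 + t^4 = 1 := by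
    have h1 : t^4 + 3*t^2*t^2 + t^4 = 5 * t^4 := by ring
    rw [h1, ht4]; norm_num
  simp only [E]
  have h1 : (2*(1:ℝ)^2+3*0^2)*t^6 + (9*1^2+6*0^2)*t^4*t^2 + 10*1*0*t^3*t^3
      + (6*1^2+9*0^2)*t^2*t^4 + (3*1^2+2*0^2)*t^6 = 20*t^6 := by ring
  rw [hb, Real.one_rpow, h1, ht6]
  have h := sqrt5_pos
  field_simp
  ring

lemma indic_tt : ((5:ℝ) ^ (-(1:ℝ)/4))^4 + 3*((5:ℝ) ^ (-(1:ℝ)/4))^2*((5:ℝ) ^ (-(1:ℝ)/4))^2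
    + ((5:ℝ) ^ (-(1:ℝ)/4))^4 = 1 := by
  have h5 : (0:ℝ) ≤ 5 := by norm_num
  have ht4 : ((5:ℝ) ^ (-(1:ℝ)/4)) ^ 4 = 1/5 := by
    rw [← Real.rpow_natCast ((5:ℝ) ^ (-(1:ℝ)/4)) 4, ← Real.rpow_mul h5]
    norm_num
  have h1 : ((5:ℝ) ^ (-(1:ℝ)/4))^4 + 3*((5:ℝ) ^ (-(1:ℝ)/4))^2*((5:ℝ) ^ (-(1:ℝ)/4))^2
      + ((5:ℝ) ^ (-(1:ℝ)/4))^4 = 5 * ((5:ℝ) ^ (-(1:ℝ)/4))^4 := by ring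
  rw [h1, ht4]; norm_num

theorem example_X_1_0 :
    E 1 0 1 0 = 1/2 ∧ E 1 0 0 1 = 3/4 ∧ E 1 0 1 1 = 1 / Real.sqrt 5 ∧
    E 1 0 1 (-1) = 1 / Real.sqrt 5 ∧ 1 / Real.sqrt 5 < 1/2 ∧ (1:ℝ)/2 < 3/4 ∧
    (¬ ∀ y₁ y₂ : ℝ, y₁^4 + 3*y₁^2*y₂^2 + y₂^4 = 1 → E 1 0 1 0 ≤ E 1 0 y₁ y₂) ∧
    (¬ ∀ y₁ y₂ : ℝ, y₁^4 + 3*y₁^2*y₂^2 + y₂^4 = 1 → E 1 0 y₁ y₂ ≤ E 1 0 1 0) := by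
  refine ⟨E10, E01, E11, E1m1, lt_half, by norm_num, ?_, ?_⟩
  · intro h
    have := h ((5:ℝ) ^ (-(1:ℝ)/4)) ((5:ℝ) ^ (-(1:ℝ)/4)) (by
      have := indic_tt; linarith [indic_tt])
    rw [E10, Ett] at this
    linarith [lt_half]
  · intro h
    have := h 0 1 (by norm_num)
    rw [E10, E01] at this
    linarith
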